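/- For all n ≥ 0, a_{n+2} = Σ_{λ ∈ B(n)} Π_{i ≥ 0} C(i+3, m_{2^i}(λ)), where the product over i ≥ 0 is finite since all but finitely many factors equal 1, and C(i+3, m) denotes the binomial coefficient (equal to 0 when m > i+3). -/

import Mathlib

/-- `pre2 s` is the multiset of all pairwise products of two distinct entries
(by position) of the multiset `s`, i.e. the summands of `e₂` evaluated at `s`. -/
def pre2 (s : Multiset ℕ) : Multiset ℕ := (Multiset.powersetCard 2 s).map Multiset.prod

open Classical in
/-- The finset of binary partitions of `n`: partitions all of whose parts are powers of 2. -/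
noncomputable def binaryPartitions (n : ℕ) : Finset (Nat.Partition n) :=
  Finset.univ.filter fun l => ∀ p ∈ l.parts, ∃ i : ℕ, p = 2 ^ i

/-- `a n = m₁(ImB₂(n))`: the total number of parts equal to 1 in the image of `pre2`
on binary partitions of `n` with at least two parts; by injectivity this equals
`∑_{λ ∈ B(n)} C(m₁(λ), 2)`. -/
noncomputable def a (n : ℕ) : ℕ :=
  ∑ l ∈ binaryPartitions n, Nat.choose (l.parts.count 1) 2

/-!
Splitting off the ones, a binary partition of `n` is `1^(n - 2s)` together with the double of a
binary partition of `s`. For `R k n = ∑_λ ∏_i C(i + k, m_{2^i}(λ))` this gives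
`R k n = ∑_s C(k, n - 2s) R (k + 1) s`, since doubling shifts every `m_{2^i}` to `m_{2^(i+1)}`.
For `L k n = ∑_λ C(m_1(λ) + k, k)` the same splitting, applied twice, gives
`L k n = ∑_s C(k + 1, n - 2s) L (k + 1) s`, the coefficientwise form of
`1 / (1 - X)^(k+1) = (1 + X)^(k+1) / (1 - X^2)^(k+1)`. Hence `L k = R (k + 1)` by induction on `n`,
and `a (n + 2) = L 2 n` because both equal `∑_s C(n + 2 - 2s, 2) |B(s)|`.
-/

open Finset

lemma mem_binaryPartitions {n : ℕ} {l : Nat.Partition n} :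
    l ∈ binaryPartitions n ↔ ∀ p ∈ l.parts, ∃ i : ℕ, p = 2 ^ i := by
  simp [binaryPartitions]

lemma sum_binaryPartitions_zero {M : Type*} [AddCommMonoid M] (W : Multiset ℕ → M) :
    ∑ l ∈ binaryPartitions 0, W l.parts = W 0 := by
  simp [binaryPartitions]

def halfParts (s : Multiset ℕ) : Multiset ℕ := (s.filter (· ≠ 1)).map (· / 2)

lemma exists_two_pow_of_mem_halfParts {s : Multiset ℕ} (hs : ∀ p ∈ s, ∃ i : ℕ, p = 2 ^ i)
    {q : ℕ} (hq : q ∈ halfParts s) : ∃ i : ℕ, q = 2 ^ i := by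
  obtain ⟨p, hp, rfl⟩ := Multiset.mem_map.1 hq
  obtain ⟨hps, hp1⟩ := Multiset.mem_filter.1 hp
  obtain ⟨_ | i, rfl⟩ := hs p hps
  · exact absurd (pow_zero 2) hp1
  · exact ⟨i, by rw [pow_succ, Nat.mul_div_cancel _ two_pos]⟩

lemma replicate_add_map_two_mul_halfParts {s : Multiset ℕ} (hs : ∀ p ∈ s, ∃ i : ℕ, p = 2 ^ i) :
    Multiset.replicate (s.count 1) 1 + (halfParts s).map (2 * ·) = s := by
  have hdouble : (halfParts s).map (2 * ·) = s.filter (· ≠ 1) := by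
    rw [halfParts, Multiset.map_map]
    refine (Multiset.map_congr rfl fun p hp => ?_).trans (Multiset.map_id' _)
    obtain ⟨hps, hp1⟩ := Multiset.mem_filter.1 hp
    obtain ⟨_ | i, rfl⟩ := hs p hps
    · exact absurd (pow_zero 2) hp1
    · simp [pow_succ, mul_comm]
  rw [hdouble, ← Multiset.filter_eq' s 1]
  exact Multiset.filter_add_not _ s

lemma count_one_replicate_add_map_two_mul (m : ℕ) (t : Multiset ℕ) :
    (Multiset.replicate m 1 + t.map (2 * ·)).count 1 = m := by
  have h1 : (1 : ℕ) ∉ t.map (2 * ·) := by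
    simp only [Multiset.mem_map, not_exists, not_and]
    omega
  rw [Multiset.count_add, Multiset.count_replicate_self, Multiset.count_eq_zero.2 h1, add_zero]

lemma count_two_pow_succ_replicate_add_map_two_mul (m : ℕ) (t : Multiset ℕ) (i : ℕ) :
    (Multiset.replicate m 1 + t.map (2 * ·)).count (2 ^ (i + 1)) = t.count (2 ^ i) := by
  have h1 : (1 : ℕ) ≠ 2 ^ (i + 1) := (Nat.one_lt_two_pow i.succ_ne_zero).ne
  rw [Multiset.count_add, Multiset.count_replicate, if_neg h1, zero_add, pow_succ',
    Multiset.count_map_eq_count' _ _ (mul_right_injective₀ two_ne_zero)]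

def onesAddDouble {s : ℕ} (μ : Nat.Partition s) (n : ℕ) (h : 2 * s ≤ n) : Nat.Partition n where
  parts := Multiset.replicate (n - 2 * s) 1 + μ.parts.map (2 * ·)
  parts_pos hi := by
    rcases Multiset.mem_add.1 hi with hi | hi
    · rw [Multiset.eq_of_mem_replicate hi]; exact one_pos
    · obtain ⟨x, hx, rfl⟩ := Multiset.mem_map.1 hi
      exact Nat.mul_pos two_pos (μ.parts_pos hx)
  parts_sum := by
    rw [Multiset.sum_add, Multiset.sum_replicate, Multiset.sum_map_mul_left, Multiset.map_id',
      μ.parts_sum, smul_eq_mul, mul_one]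
    omega

theorem sum_binaryPartitions_eq_sum_half {M : Type*} [AddCommMonoid M] (n : ℕ)
    (W : Multiset ℕ → M) :
    ∑ l ∈ binaryPartitions n, W l.parts = ∑ s ∈ range (n / 2 + 1), ∑ μ ∈ binaryPartitions s,
      W (Multiset.replicate (n - 2 * s) 1 + μ.parts.map (2 * ·)) := by
  rw [sum_sigma']
  symm
  refine sum_bij (fun x hx => onesAddDouble x.2 n (by
      have := mem_range.1 (mem_sigma.1 hx).1; omega)) ?_ ?_ ?_ fun _ _ => rfl
  · rintro ⟨s, μ⟩ hx
    refine mem_binaryPartitions.2 fun p hp => ?_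
    rcases Multiset.mem_add.1 hp with hp | hp
    · exact ⟨0, Multiset.eq_of_mem_replicate hp⟩
    · obtain ⟨x, hx', rfl⟩ := Multiset.mem_map.1 hp
      obtain ⟨i, rfl⟩ := mem_binaryPartitions.1 (mem_sigma.1 hx).2 x hx'
      exact ⟨i + 1, (pow_succ' 2 i).symm⟩
  · rintro ⟨s, μ⟩ hx ⟨s', μ'⟩ hx' h
    simp only [mem_sigma, mem_range] at hx hx'
    have hparts := congrArg Nat.Partition.parts h
    have hs : s = s' := by
      have := congrArg (Multiset.count 1) hparts
      simp only [onesAddDouble, count_one_replicate_add_map_two_mul] at this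
      omega
    subst hs
    have hμ : μ = μ' := Nat.Partition.ext <| Multiset.map_injective
      (mul_right_injective₀ two_ne_zero) (add_left_cancel hparts)
    rw [hμ]
  · intro l hl
    have hbin := mem_binaryPartitions.1 hl
    have hdecomp := replicate_add_map_two_mul_halfParts hbin
    have hsum : l.parts.count 1 + 2 * (halfParts l.parts).sum = n := by
      conv_rhs => rw [← l.parts_sum, ← hdecomp]
      rw [Multiset.sum_add, Multiset.sum_replicate, Multiset.sum_map_mul_left, Multiset.map_id',
        smul_eq_mul, mul_one]
    let μ : Nat.Partition (halfParts l.parts).sum :=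
      ⟨halfParts l.parts, fun hq => by
        obtain ⟨i, rfl⟩ := exists_two_pow_of_mem_halfParts hbin hq; positivity, rfl⟩
    have hμ : (halfParts l.parts).sum < n / 2 + 1 := by omega
    refine ⟨⟨_, μ⟩, mem_sigma.2 ⟨mem_range.2 hμ,
      mem_binaryPartitions.2 fun q hq => exists_two_pow_of_mem_halfParts hbin hq⟩, ?_⟩
    refine Nat.Partition.ext ?_
    simp only [onesAddDouble]
    convert hdecomp using 3
    omega

lemma sum_binaryPartitions_count_one (n : ℕ) (f : ℕ → ℕ) :
    ∑ l ∈ binaryPartitions n, f (l.parts.count 1) =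
      ∑ s ∈ range (n / 2 + 1), f (n - 2 * s) * #(binaryPartitions s) := by
  rw [sum_binaryPartitions_eq_sum_half n (fun t => f (t.count 1))]
  refine sum_congr rfl fun s _ => ?_
  rw [sum_congr rfl fun μ _ => congrArg f (count_one_replicate_add_map_two_mul _ μ.parts),
    sum_const, smul_eq_mul, mul_comm]

lemma card_binaryPartitions (n : ℕ) :
    #(binaryPartitions n) = ∑ s ∈ range (n / 2 + 1), #(binaryPartitions s) := by
  simpa using sum_binaryPartitions_count_one n (fun _ => 1)

lemma finprod_nat_eq_mul_finprod_succ {M : Type*} [CommMonoid M] {f : ℕ → M}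
    (hf : f.HasFiniteMulSupport) : ∏ᶠ i, f i = f 0 * ∏ᶠ i, f (i + 1) := by
  obtain ⟨N, hN⟩ := hf.bddAbove
  have hsupp : f.mulSupport ⊆ range (N + 1) := fun i hi => by
    simpa [Nat.lt_succ_iff] using hN hi
  rw [finprod_eq_prod_of_mulSupport_subset f hsupp,
    finprod_eq_prod_of_mulSupport_subset (fun i => f (i + 1)) (s := range N) fun i hi => by
      simpa [Nat.lt_succ_iff] using hN hi, prod_range_succ', mul_comm]

lemma hasFiniteMulSupport_choose_count (t : Multiset ℕ) (k : ℕ) :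
    (fun i : ℕ => (i + k).choose (t.count (2 ^ i))).HasFiniteMulSupport := by
  refine ((t.toFinset.finite_toSet).preimage (Nat.pow_right_injective le_rfl).injOn).subset
    fun i hi => ?_
  by_contra h
  simp [Multiset.count_eq_zero_of_notMem (by simpa using h)] at hi

noncomputable def binomProdSum (k n : ℕ) : ℕ :=
  ∑ l ∈ binaryPartitions n, ∏ᶠ i : ℕ, (i + k).choose (l.parts.count (2 ^ i))

lemma binomProdSum_zero (k : ℕ) : binomProdSum k 0 = 1 := by
  rw [binomProdSum, sum_binaryPartitions_zero fun t => ∏ᶠ i : ℕ, (i + k).choose (t.count (2 ^ i))]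
  simp

lemma binomProdSum_eq (k n : ℕ) :
    binomProdSum k n = ∑ s ∈ range (n / 2 + 1), k.choose (n - 2 * s) * binomProdSum (k + 1) s := by
  rw [binomProdSum,
    sum_binaryPartitions_eq_sum_half n fun t => ∏ᶠ i : ℕ, (i + k).choose (t.count (2 ^ i))]
  refine sum_congr rfl fun s _ => ?_
  rw [binomProdSum, mul_sum]
  refine sum_congr rfl fun μ _ => ?_
  rw [finprod_nat_eq_mul_finprod_succ (hasFiniteMulSupport_choose_count _ k)]
  simp only [pow_zero, zero_add, count_one_replicate_add_map_two_mul,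
    count_two_pow_succ_replicate_add_map_two_mul, add_right_comm _ 1 k, add_assoc]

/-- The coefficient of `X ^ c` in `(1 + X) ^ m / (1 - X ^ 2) ^ (k + 1)`. -/
def binomSqConv (m k c : ℕ) : ℕ :=
  ∑ j ∈ range (c / 2 + 1), m.choose (c - 2 * j) * (j + k).choose k

lemma binomSqConv_succ_succ_left (m k c : ℕ) :
    binomSqConv (m + 1) k (c + 1) = binomSqConv m k (c + 1) + binomSqConv m k c := by
  have hterm : ∀ j ∈ range ((c + 1) / 2 + 1),
      (m + 1).choose (c + 1 - 2 * j) * (j + k).choose k =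
        m.choose (c + 1 - 2 * j) * (j + k).choose k +
          if 2 * j ≤ c then m.choose (c - 2 * j) * (j + k).choose k else 0 := by
    intro j _
    split_ifs with h
    · rw [show c + 1 - 2 * j = c - 2 * j + 1 by omega, Nat.choose_succ_succ', add_mul, add_comm]
    · simp [show c + 1 - 2 * j = 0 by omega]
  have hrange : (range ((c + 1) / 2 + 1)).filter (fun j => 2 * j ≤ c) = range (c / 2 + 1) := by
    ext j
    simp only [mem_filter, mem_range]
    omega
  rw [binomSqConv, sum_congr rfl hterm, sum_add_distrib, ← sum_filter, hrange]
  rfl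

lemma binomSqConv_succ_right_add_two (m k c : ℕ) :
    binomSqConv m (k + 1) (c + 2) = binomSqConv m (k + 1) c + binomSqConv m k (c + 2) := by
  have hpascal : binomSqConv m (k + 1) (c + 2) = ∑ j ∈ range (c / 2 + 2),
      (m.choose (c + 2 - 2 * j) * (j + k).choose (k + 1) +
        m.choose (c + 2 - 2 * j) * (j + k).choose k) := by
    rw [binomSqConv, show (c + 2) / 2 + 1 = c / 2 + 2 by omega]
    refine sum_congr rfl fun j _ => ?_
    rw [← add_assoc, Nat.choose_succ_succ', mul_add, add_comm]
  rw [hpascal, sum_add_distrib, sum_range_succ' _ (c / 2 + 1), zero_add, Nat.choose_succ_self,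
    mul_zero, add_zero, binomSqConv, binomSqConv, show (c + 2) / 2 + 1 = c / 2 + 2 by omega]
  congr 1
  refine sum_congr rfl fun j _ => ?_
  rw [show c + 2 - 2 * (j + 1) = c - 2 * j by omega, add_right_comm, add_assoc]

lemma binomSqConv_one_zero (c : ℕ) : binomSqConv 1 0 c = 1 := by
  rw [binomSqConv, sum_eq_single (c / 2)]
  · rw [show c - 2 * (c / 2) = c % 2 by omega]
    rcases Nat.mod_two_eq_zero_or_one c with h | h <;> simp [h]
  · intro j hj hne
    rw [Nat.choose_eq_zero_of_lt (by rw [mem_range] at hj; omega), zero_mul]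
  · simp

/-- `(1 + X) ^ (k + 1) / (1 - X ^ 2) ^ (k + 1) = 1 / (1 - X) ^ (k + 1)`. -/
lemma binomSqConv_succ_self (k c : ℕ) : binomSqConv (k + 1) k c = (c + k).choose k := by
  induction k generalizing c with
  | zero => simp [binomSqConv_one_zero]
  | succ k ihk =>
    induction c using Nat.strong_induction_on with
    | _ c ihc =>
      match c with
      | 0 => simp [binomSqConv]
      | 1 => simp [binomSqConv, add_comm 1, Nat.choose_succ_self_right]
      | c + 2 =>
        rw [binomSqConv_succ_right_add_two, ihc c (by omega), binomSqConv_succ_succ_left, ihk, ihk,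
          show c + 2 + (k + 1) = c + 1 + 1 + k + 1 by ring, Nat.choose_succ_succ',
          show c + 1 + 1 + k = c + 1 + k + 1 by ring, Nat.choose_succ_succ',
          show c + 1 + k = c + (k + 1) by ring]
        ring

lemma sum_Ico_choose_sub_add (k r t : ℕ) (h : t ≤ r) :
    ∑ s ∈ Ico t (r + 1), (r - s + k).choose k = (r - t + k + 1).choose (k + 1) := by
  rw [sum_Ico_eq_sum_range, show r + 1 - t = r - t + 1 by omega,
    ← Nat.sum_range_add_choose, ← sum_range_reflect]
  refine sum_congr rfl fun j hj => ?_
  rw [mem_range] at hj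
  rw [show r - (t + (r - t + 1 - 1 - j)) = j by omega]

noncomputable def onesBinomSum (k n : ℕ) : ℕ :=
  ∑ l ∈ binaryPartitions n, (l.parts.count 1 + k).choose k

lemma onesBinomSum_eq_sum_card (k n : ℕ) :
    onesBinomSum k n = ∑ s ∈ range (n / 2 + 1), (n - 2 * s + k).choose k * #(binaryPartitions s) :=
  sum_binaryPartitions_count_one n fun m => (m + k).choose k

lemma onesBinomSum_succ_eq (k r : ℕ) :
    onesBinomSum (k + 1) r = ∑ s ∈ range (r + 1), (r - s + k).choose k * #(binaryPartitions s) := by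
  calc onesBinomSum (k + 1) r
      = ∑ t ∈ range (r / 2 + 1), ∑ s ∈ Ico (2 * t) (r + 1),
          (r - s + k).choose k * #(binaryPartitions t) := by
        rw [onesBinomSum_eq_sum_card]
        refine sum_congr rfl fun t ht => ?_
        rw [← sum_mul, sum_Ico_choose_sub_add k r (2 * t) (by rw [mem_range] at ht; omega)]
        rfl
    _ = ∑ s ∈ range (r + 1), ∑ t ∈ range (s / 2 + 1),
          (r - s + k).choose k * #(binaryPartitions t) := by
        refine sum_comm' fun t s => ?_
        simp only [mem_range, mem_Ico]
        omega
    _ = _ := by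
        refine sum_congr rfl fun s _ => ?_
        rw [← mul_sum, ← card_binaryPartitions]

lemma onesBinomSum_eq (k n : ℕ) :
    onesBinomSum k n =
      ∑ r ∈ range (n / 2 + 1), (k + 1).choose (n - 2 * r) * onesBinomSum (k + 1) r := by
  calc onesBinomSum k n
      = ∑ s ∈ range (n / 2 + 1), ∑ r ∈ Ico s (n / 2 + 1),
          (k + 1).choose (n - 2 * r) * ((r - s + k).choose k * #(binaryPartitions s)) := by
        rw [onesBinomSum_eq_sum_card]
        refine sum_congr rfl fun s hs => ?_
        rw [mem_range] at hs
        simp only [← mul_assoc]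
        rw [← sum_mul, ← binomSqConv_succ_self, binomSqConv, sum_Ico_eq_sum_range,
          show (n - 2 * s) / 2 + 1 = n / 2 + 1 - s by omega]
        congr 1
        refine sum_congr rfl fun j _ => ?_
        rw [show n - 2 * (s + j) = n - 2 * s - 2 * j by omega, Nat.add_sub_cancel_left]
    _ = ∑ r ∈ range (n / 2 + 1), ∑ s ∈ range (r + 1),
          (k + 1).choose (n - 2 * r) * ((r - s + k).choose k * #(binaryPartitions s)) := by
        refine sum_comm' fun s r => ?_
        simp only [mem_range, mem_Ico]
        omega
    _ = _ := by
        refine sum_congr rfl fun r _ => ?_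
        rw [← mul_sum, onesBinomSum_succ_eq]

theorem onesBinomSum_eq_binomProdSum (k n : ℕ) : onesBinomSum k n = binomProdSum (k + 1) n := by
  induction n using Nat.strong_induction_on generalizing k with
  | _ n ih =>
    rcases n.eq_zero_or_pos with rfl | hn
    · rw [binomProdSum_zero, onesBinomSum,
        sum_binaryPartitions_zero fun t => (t.count 1 + k).choose k]
      simp
    · rw [onesBinomSum_eq, binomProdSum_eq]
      refine sum_congr rfl fun s hs => ?_
      rw [ih s (by rw [mem_range] at hs; omega)]

lemma a_add_two (n : ℕ) : a (n + 2) = onesBinomSum 2 n := by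
  rw [a, sum_binaryPartitions_count_one (n + 2) fun m => m.choose 2, onesBinomSum_eq_sum_card,
    show (n + 2) / 2 + 1 = n / 2 + 1 + 1 by omega, sum_range_succ,
    Nat.choose_eq_zero_of_lt (by omega : n + 2 - 2 * (n / 2 + 1) < 2), zero_mul, add_zero]
  refine sum_congr rfl fun s hs => ?_
  rw [mem_range] at hs
  rw [show n + 2 - 2 * s = n - 2 * s + 2 by omega]

theorem stmt_19 (n : ℕ) :
    a (n + 2) = ∑ l ∈ binaryPartitions n,
      ∏ᶠ i : ℕ, Nat.choose (i + 3) (l.parts.count (2 ^ i)) := by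
  rw [a_add_two, onesBinomSum_eq_binomProdSum]
  rfl
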